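/- arXiv:2511.17050 — 7 statements merged into one kernel-verified Lean document; each statement's English description precedes it below -/
import Mathlib

section
/- Let μ > 0, let 0 < a < μ/2 and let 0 ≤ x ≤ μ − 2a. Then (G_μ(x+a) − G_μ(x+2a)) / (G_μ(x) − G_μ(x+a)) < 1 − (a/μ)·g''(x/μ)/|g'(x/μ)|, and in particular (G_μ(x+a) − G_μ(x+2a)) / (G_μ(x) − G_μ(x+a)) < 1 − 2a/(πμ). (Both denominators are positive since G_μ is strictly decreasing on [0, μ].) -/
/-!
Write `D₁ = g y - g (y + b)` and `D₂ = g (y + b) - g (y + 2b)` with `y = x/μ`, `b = a/μ`; the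
ratio in question is `D₂ / D₁ = 1 - (D₁ - D₂) / D₁`. Since `g' = -arccos/π` and `arccos` is
decreasing, the mean value theorem gives `D₁ ≤ b·arccos y/π`. Applied to `t ↦ g t - g (t + b)` and
then to `arccos`, it writes `D₁ - D₂` as `b²/(π√(1-ζ²))` with `y < ζ`, which exceeds
`b²/(π√(1-y²))` because `y ≥ 0`. Dividing gives the first bound; the second follows from
`arccos y ≤ π/2` and `√(1-y²) ≤ 1`.
-/

/-- The function `g(x) = (1/π)(√(1−x²) − x·arccos x)`. -/
noncomputable def g (x : ℝ) : ℝ := (1 / Real.pi) * (Real.sqrt (1 - x ^ 2) - x * Real.arccos x)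

/-- For `μ > 0`, `G_μ(x) = μ·g(x/μ)`. -/
noncomputable def G (μ x : ℝ) : ℝ := μ * g (x / μ)

open Real Set

lemma hasDerivAt_g {t : ℝ} (h₁ : -1 < t) (h₂ : t < 1) :
    HasDerivAt g (-arccos t / π) t := by
  have hs : 1 - t ^ 2 ≠ 0 := by nlinarith
  have hsqrt : HasDerivAt (fun u : ℝ => √(1 - u ^ 2)) (-(2 * t) / (2 * √(1 - t ^ 2))) t := by
    simpa using (((hasDerivAt_id t).pow 2).const_sub 1).sqrt hs
  have hmul : HasDerivAt (fun u : ℝ => u * arccos u) (1 * arccos t + t * -(1 / √(1 - t ^ 2))) t :=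
    (hasDerivAt_id t).mul (hasDerivAt_arccos h₁.ne' h₂.ne)
  refine ((hsqrt.sub hmul).const_mul (1 / π)).congr_deriv ?_
  field_simp
  ring

lemma continuous_g : Continuous g := by
  unfold g
  fun_prop

lemma exists_g_sub_g_eq {y b : ℝ} (hb : 0 < b) (hy : -1 ≤ y) (hyb : y + b ≤ 1) :
    ∃ ξ ∈ Ioo y (y + b), g y - g (y + b) = b * arccos ξ / π := by
  obtain ⟨ξ, hξ, hslope⟩ := exists_hasDerivAt_eq_slope g (fun t => -arccos t / π)
    (by linarith : y < y + b) continuous_g.continuousOn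
    (fun t ht => hasDerivAt_g (by linarith [ht.1]) (by linarith [ht.2]))
  refine ⟨ξ, hξ, ?_⟩
  rw [add_sub_cancel_left, eq_div_iff hb.ne'] at hslope
  linear_combination hslope

lemma g_sub_g_pos {y b : ℝ} (hb : 0 < b) (hy : -1 ≤ y) (hyb : y + b ≤ 1) :
    0 < g y - g (y + b) := by
  obtain ⟨ξ, hξ, heq⟩ := exists_g_sub_g_eq hb hy hyb
  have : 0 < arccos ξ := arccos_pos.2 (by linarith [hξ.2])
  rw [heq]
  positivity

lemma g_sub_g_le {y b : ℝ} (hb : 0 < b) (hy : -1 ≤ y) (hyb : y + b ≤ 1) :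
    g y - g (y + b) ≤ b * arccos y / π := by
  obtain ⟨ξ, hξ, heq⟩ := exists_g_sub_g_eq hb hy hyb
  have : arccos ξ ≤ arccos y := arccos_le_arccos hξ.1.le
  rw [heq]
  gcongr

lemma div_sqrt_lt_arccos_sub_arccos {y t b : ℝ} (hb : 0 < b) (hy : 0 ≤ y) (hyt : y ≤ t)
    (htb : t + b ≤ 1) :
    b / √(1 - y ^ 2) < arccos t - arccos (t + b) := by
  obtain ⟨ζ, hζ, hslope⟩ := exists_hasDerivAt_eq_slope arccos (fun u => -(1 / √(1 - u ^ 2)))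
    (by linarith : t < t + b) continuous_arccos.continuousOn
    (fun u hu => hasDerivAt_arccos (by linarith [hu.1]) (by linarith [hu.2]))
  rw [add_sub_cancel_left, eq_div_iff hb.ne'] at hslope
  have hζ1 : 0 < 1 - ζ ^ 2 := by nlinarith [hζ.1, hζ.2]
  have hsqrt : √(1 - ζ ^ 2) < √(1 - y ^ 2) := sqrt_lt_sqrt hζ1.le (by nlinarith [hζ.1])
  calc b / √(1 - y ^ 2) < b / √(1 - ζ ^ 2) := by gcongr
    _ = arccos t - arccos (t + b) := by
      rw [div_eq_mul_one_div]
      linarith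

lemma sq_div_lt_second_difference_g {y b : ℝ} (hb : 0 < b) (hy : 0 ≤ y) (hyb : y + 2 * b ≤ 1) :
    b ^ 2 / (π * √(1 - y ^ 2)) < (g y - g (y + b)) - (g (y + b) - g (y + 2 * b)) := by
  obtain ⟨η, hη, hslope⟩ := exists_hasDerivAt_eq_slope (fun t => g t - g (t + b))
    (fun t => -arccos t / π - -arccos (t + b) / π) (by linarith : y < y + b)
    (continuous_g.sub (continuous_g.comp (continuous_add_const b))).continuousOn
    (fun t ht => (hasDerivAt_g (by linarith [ht.1]) (by linarith [ht.2])).sub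
      ((hasDerivAt_g (by linarith [ht.1]) (by linarith [ht.2])).comp_add_const t b))
  rw [add_sub_cancel_left, eq_div_iff hb.ne', add_assoc, ← two_mul] at hslope
  have hgap := div_sqrt_lt_arccos_sub_arccos hb hy hη.1.le (by linarith [hη.2])
  calc b ^ 2 / (π * √(1 - y ^ 2)) = b * (b / √(1 - y ^ 2)) / π := by ring
    _ < b * (arccos η - arccos (η + b)) / π := by gcongr
    _ = _ := by linear_combination -hslope

lemma g_ratio_lt {y b : ℝ} (hb : 0 < b) (hy : 0 ≤ y) (hyb : y + 2 * b ≤ 1) :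
    (g (y + b) - g (y + 2 * b)) / (g y - g (y + b)) <
      1 - b * (1 / (arccos y * √(1 - y ^ 2))) := by
  have hD₁ : 0 < g y - g (y + b) := g_sub_g_pos hb (by linarith) (by linarith)
  have hD₁le : g y - g (y + b) ≤ b * arccos y / π := g_sub_g_le hb (by linarith) (by linarith)
  have hgap := sq_div_lt_second_difference_g hb hy hyb
  have harccos : 0 < arccos y := arccos_pos.2 (by linarith)
  have hsqrt : 0 < √(1 - y ^ 2) := sqrt_pos.2 (by nlinarith)
  have hbound : b * (1 / (arccos y * √(1 - y ^ 2))) * (g y - g (y + b)) ≤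
      b ^ 2 / (π * √(1 - y ^ 2)) :=
    calc b * (1 / (arccos y * √(1 - y ^ 2))) * (g y - g (y + b))
        ≤ b * (1 / (arccos y * √(1 - y ^ 2))) * (b * arccos y / π) := by gcongr
      _ = b ^ 2 / (π * √(1 - y ^ 2)) := by field_simp
  rw [div_lt_iff₀ hD₁]
  linarith

lemma two_div_pi_le_one_div_arccos_mul_sqrt {y : ℝ} (hy₀ : 0 ≤ y) (hy₁ : y < 1) :
    2 / π ≤ 1 / (arccos y * √(1 - y ^ 2)) := by
  have harccos : 0 < arccos y := arccos_pos.2 hy₁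
  have hsqrt : 0 < √(1 - y ^ 2) := sqrt_pos.2 (by nlinarith)
  have hprod : arccos y * √(1 - y ^ 2) ≤ π / 2 * 1 :=
    mul_le_mul (arccos_le_pi_div_two.2 hy₀) (sqrt_le_one.2 (by nlinarith)) hsqrt.le
      (by positivity)
  rw [div_le_div_iff₀ pi_pos (by positivity)]
  linarith

lemma G_ratio_eq {μ : ℝ} (hμ : μ ≠ 0) (x a : ℝ) :
    (G μ (x + a) - G μ (x + 2 * a)) / (G μ x - G μ (x + a)) =
      (g (x / μ + a / μ) - g (x / μ + 2 * (a / μ))) / (g (x / μ) - g (x / μ + a / μ)) := by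
  simp only [G, ← mul_sub, mul_div_mul_left _ _ hμ, add_div, mul_div_assoc]

theorem stmt0_general (μ a x : ℝ) (hμ : 0 < μ) (ha : 0 < a)
    (hx0 : 0 ≤ x) (hx : x ≤ μ - 2 * a) :
    (G μ (x + a) - G μ (x + 2 * a)) / (G μ x - G μ (x + a)) <
      1 - (a / μ) * (1 / (Real.arccos (x / μ) * Real.sqrt (1 - (x / μ) ^ 2))) ∧
    (G μ (x + a) - G μ (x + 2 * a)) / (G μ x - G μ (x + a)) <
      1 - 2 * a / (Real.pi * μ) := by
  have hb : 0 < a / μ := div_pos ha hμ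
  have hy : 0 ≤ x / μ := div_nonneg hx0 hμ.le
  have hyb : x / μ + 2 * (a / μ) ≤ 1 := by
    rw [← mul_div_assoc, ← add_div, div_le_one hμ]
    linarith
  have hlt := g_ratio_lt hb hy hyb
  rw [G_ratio_eq hμ.ne']
  refine ⟨hlt, hlt.trans_le ?_⟩
  have h2π := two_div_pi_le_one_div_arccos_mul_sqrt hy (by linarith)
  calc 1 - a / μ * (1 / (arccos (x / μ) * √(1 - (x / μ) ^ 2))) ≤ 1 - a / μ * (2 / π) := by
        gcongr
    _ = 1 - 2 * a / (π * μ) := by ring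

/-- Lemma 2.1: for `μ > 0`, `0 < a < μ/2`, `0 ≤ x ≤ μ − 2a`, the ratio
`(G_μ(x+a) − G_μ(x+2a))/(G_μ(x) − G_μ(x+a))` is less than
`1 − (a/μ)·g''(x/μ)/|g'(x/μ)|` (where `g''(y)/|g'(y)| = 1/(arccos(y)·√(1−y²))`),
and in particular less than `1 − 2a/(πμ)`. -/
theorem stmt0 (μ a x : ℝ) (hμ : 0 < μ) (ha : 0 < a) (ha' : a < μ / 2)
    (hx0 : 0 ≤ x) (hx : x ≤ μ - 2 * a) :
    (G μ (x + a) - G μ (x + 2 * a)) / (G μ x - G μ (x + a)) <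
      1 - (a / μ) * (1 / (Real.arccos (x / μ) * Real.sqrt (1 - (x / μ) ^ 2))) ∧
    (G μ (x + a) - G μ (x + 2 * a)) / (G μ x - G μ (x + a)) <
      1 - 2 * a / (Real.pi * μ) :=
  stmt0_general μ a x hμ ha hx0 hx
end

section
/- For every μ ≥ 12, the lattice point counting function satisfies 𝒫^N_2(μ) ≥ μ²/4 + 0.0014·μ. (Since the Neumann eigenvalue counting function of the unit disk satisfies 𝒩^N(μ) ≥ 𝒫^N_2(μ), this is an improvement of the Neumann Pólya conjecture for the unit disk.) -/
/-- The lattice point counting function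
`𝒫^N_2(μ) = −⌊μ/π + 3/4⌋ + 2·Σ_{m=0}^{⌊μ⌋} ⌊G_μ(m) + 3/4⌋`. -/
noncomputable def latticePN2 (μ : ℝ) : ℝ :=
  -(⌊μ / Real.pi + 3 / 4⌋ : ℝ) + 2 * ∑ m ∈ Finset.range (⌊μ⌋₊ + 1), (⌊G μ (m : ℝ) + 3 / 4⌋ : ℝ)

open Real Set
open scoped Finset

namespace DiskLattice

theorem le_of_deriv_le {f g : ℝ → ℝ} {a b : ℝ} (hf : Differentiable ℝ f) (hg : Differentiable ℝ g)
    (ha : f a ≤ g a) (hfg : ∀ y ∈ Icc a b, deriv f y ≤ deriv g y) (hab : a ≤ b) : f b ≤ g b := by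
  have hmono : MonotoneOn (g - f) (Icc a b) :=
    monotoneOn_of_deriv_nonneg (convex_Icc a b) (hg.sub hf).continuous.continuousOn
      (hg.sub hf).differentiableOn fun y hy => by
        rw [deriv_sub (hg y) (hf y), sub_nonneg]
        exact hfg y (interior_subset hy)
  have := hmono (left_mem_Icc.2 hab) (right_mem_Icc.2 hab) hab
  simp only [Pi.sub_apply] at this
  linarith

theorem cos_le_taylor4 {x : ℝ} (hx : 0 ≤ x) : cos x ≤ 1 - x ^ 2 / 2 + x ^ 4 / 24 := by
  refine le_of_deriv_le (g := fun y => 1 - y ^ 2 / 2 + y ^ 4 / 24) (by fun_prop) (by fun_prop)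
    (by simp) (fun y hy => ?_) hx
  simp (disch := fun_prop) [deriv_div_const]
  nlinarith [sin_ge_sub_cube hy.1]

theorem sin_le_taylor5 {x : ℝ} (hx : 0 ≤ x) : sin x ≤ x - x ^ 3 / 6 + x ^ 5 / 120 := by
  refine le_of_deriv_le (g := fun y => y - y ^ 3 / 6 + y ^ 5 / 120) (by fun_prop) (by fun_prop)
    (by simp) (fun y hy => ?_) hx
  simp (disch := fun_prop) [deriv_div_const]
  nlinarith [cos_le_taylor4 hy.1]

theorem taylor6_le_cos {x : ℝ} (hx : 0 ≤ x) : 1 - x ^ 2 / 2 + x ^ 4 / 24 - x ^ 6 / 720 ≤ cos x := by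
  refine le_of_deriv_le (f := fun y => 1 - y ^ 2 / 2 + y ^ 4 / 24 - y ^ 6 / 720) (by fun_prop)
    (by fun_prop) (by simp) (fun y hy => ?_) hx
  simp (disch := fun_prop) [deriv_div_const]
  nlinarith [sin_le_taylor5 hy.1]

theorem sin_le_tangent {a x : ℝ} (ha : 0 ≤ a) (hax : a ≤ x) (hx : x ≤ π) :
    sin x ≤ sin a + (x - a) * cos a := by
  refine le_of_deriv_le (g := fun y => sin a + (y - a) * cos a) (by fun_prop) (by fun_prop)
    (by simp) (fun y hy => ?_) hax
  simp (disch := fun_prop)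
  exact cos_le_cos_of_nonneg_of_le_pi ha (hy.2.trans hx) hy.1

noncomputable def phi (t : ℝ) : ℝ := sin t - t * cos t

noncomputable def psi (t : ℝ) : ℝ := sin (2 * t) / 8 - t * cos (2 * t) / 4

theorem hasDerivAt_phi (t : ℝ) : HasDerivAt phi (t * sin t) t := by
  refine ((hasDerivAt_sin t).sub ((hasDerivAt_id t).mul (hasDerivAt_cos t))).congr_deriv ?_
  simp only [id_eq]
  ring

theorem hasDerivAt_psi (t : ℝ) : HasDerivAt psi (t * sin t * cos t) t := by
  have h2 : HasDerivAt (fun x => 2 * x) 2 t := by simpa using (hasDerivAt_id t).const_mul 2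
  refine ((((hasDerivAt_sin (2 * t)).comp t h2).div_const 8).sub
    (((hasDerivAt_id t).mul ((hasDerivAt_cos (2 * t)).comp t h2)).div_const 4)).congr_deriv ?_
  simp only [id_eq, Function.comp_def, sin_two_mul, cos_two_mul]
  ring

@[fun_prop] theorem differentiable_phi : Differentiable ℝ phi :=
  fun t => (hasDerivAt_phi t).differentiableAt

@[fun_prop] theorem differentiable_psi : Differentiable ℝ psi :=
  fun t => (hasDerivAt_psi t).differentiableAt

@[simp] theorem deriv_phi : deriv phi = fun t => t * sin t :=
  funext fun t => (hasDerivAt_phi t).deriv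

@[simp] theorem deriv_psi : deriv psi = fun t => t * sin t * cos t :=
  funext fun t => (hasDerivAt_psi t).deriv

@[simp] theorem phi_zero : phi 0 = 0 := by simp [phi]

@[simp] theorem phi_pi_div_two : phi (π / 2) = 1 := by simp [phi]

@[simp] theorem psi_zero : psi 0 = 0 := by simp [psi]

@[simp] theorem psi_pi_div_two : psi (π / 2) = π / 8 := by
  simp [psi, mul_div_cancel₀ π two_ne_zero]
  ring

theorem strictMonoOn_phi : StrictMonoOn phi (Icc 0 π) :=
  strictMonoOn_of_deriv_pos (convex_Icc 0 π) differentiable_phi.continuous.continuousOn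
    fun t ht => by
      rw [interior_Icc] at ht
      rw [deriv_phi]
      exact mul_pos ht.1 (sin_pos_of_pos_of_lt_pi ht.1 ht.2)

theorem monotoneOn_psi : MonotoneOn psi (Icc 0 (π / 2)) :=
  monotoneOn_of_deriv_nonneg (convex_Icc 0 (π / 2)) differentiable_psi.continuous.continuousOn
    differentiable_psi.differentiableOn fun t ht => by
      rw [interior_Icc] at ht
      rw [deriv_psi]
      exact mul_nonneg (mul_nonneg ht.1.le (sin_nonneg_of_nonneg_of_le_pi ht.1.le
        (by linarith [ht.2, pi_pos]))) (cos_nonneg_of_mem_Icc ⟨by linarith [ht.1, pi_pos], ht.2.le⟩)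

theorem cube_div_three_sub_le_phi {x : ℝ} (hx : 0 ≤ x) : x ^ 3 / 3 - x ^ 5 / 24 ≤ phi x := by
  unfold phi
  nlinarith [sin_ge_sub_cube hx, mul_le_mul_of_nonneg_left (cos_le_taylor4 hx) hx]

theorem psi_le_taylor7 {x : ℝ} (hx : 0 ≤ x) :
    psi x ≤ x ^ 3 / 3 - 2 * x ^ 5 / 15 + 2 * x ^ 7 / 105 := by
  refine le_of_deriv_le (g := fun y => y ^ 3 / 3 - 2 * y ^ 5 / 15 + 2 * y ^ 7 / 105)
    differentiable_psi (by fun_prop) (by simp) (fun y hy => ?_) hx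
  simp (disch := fun_prop) [deriv_div_const]
  have h := sin_le_taylor5 (mul_nonneg two_pos.le hy.1)
  rw [sin_two_mul] at h
  nlinarith [mul_le_mul_of_nonneg_left h hy.1]

/-- The trapezoidal rule for `ψ = ∫ cos dφ`; it holds because `cos` is concave as a function
of `φ`. -/
theorem two_mul_psi_sub_le {a b : ℝ} (ha : 0 ≤ a) (hab : a ≤ b) (hb : b ≤ π) :
    2 * (psi b - psi a) ≤ (cos a + cos b) * (phi b - phi a) := by
  refine le_of_deriv_le (f := fun y => 2 * (psi y - psi a))
    (g := fun y => (cos a + cos y) * (phi y - phi a)) (by fun_prop) (by fun_prop) (by simp)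
    (fun y hy => ?_) hab
  simp (disch := fun_prop)
  have hsin := sin_nonneg_of_nonneg_of_le_pi (ha.trans hy.1) (hy.2.trans hb)
  have htan := sin_le_tangent ha hy.1 (hy.2.trans hb)
  have : (cos a + cos y) * (y * sin y) - sin y * (phi y - phi a) - 2 * (y * sin y * cos y)
      = sin y * (sin a + (y - a) * cos a - sin y) := by unfold phi; ring
  nlinarith [mul_nonneg hsin (sub_nonneg.2 htan)]

theorem g_eq_phi_arccos {x : ℝ} (hx : x ∈ Icc (-1) 1) : g x = phi (arccos x) / π := by
  rw [g, phi, cos_arccos hx.1 hx.2, sin_arccos]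
  ring

theorem g_cos {t : ℝ} (ht : t ∈ Icc 0 π) : g (cos t) = phi t / π := by
  rw [g_eq_phi_arccos ⟨neg_one_le_cos t, cos_le_one t⟩, arccos_cos ht.1 ht.2]

theorem antitoneOn_g : AntitoneOn g (Icc (-1) 1) := fun x hx y hy hxy => by
  rw [g_eq_phi_arccos hx, g_eq_phi_arccos hy]
  gcongr
  exact strictMonoOn_phi.monotoneOn ⟨arccos_nonneg y, arccos_le_pi y⟩
    ⟨arccos_nonneg x, arccos_le_pi x⟩ (arccos_le_arccos hxy)

theorem g_nonneg {x : ℝ} (hx : x ∈ Icc (-1) 1) : 0 ≤ g x := by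
  have h1 : g 1 = 0 := by simp [g]
  exact h1 ▸ antitoneOn_g hx ⟨by norm_num, le_rfl⟩ hx.2

theorem antitoneOn_G {μ : ℝ} (hμ : 0 < μ) : AntitoneOn (G μ) (Icc 0 μ) := fun x hx y hy hxy => by
  have mem : ∀ z ∈ Icc 0 μ, z / μ ∈ Icc (-1) 1 := fun z hz =>
    ⟨by linarith [div_nonneg hz.1 hμ.le], div_le_one_of_le₀ hz.2 hμ.le⟩
  exact mul_le_mul_of_nonneg_left
    (antitoneOn_g (mem x hx) (mem y hy) (div_le_div_of_nonneg_right hxy hμ.le)) hμ.le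

theorem G_nonneg {μ x : ℝ} (hμ : 0 < μ) (hx : x ∈ Icc 0 μ) : 0 ≤ G μ x :=
  mul_nonneg hμ.le (g_nonneg ⟨by linarith [div_nonneg hx.1 hμ.le], div_le_one_of_le₀ hx.2 hμ.le⟩)

theorem G_mul_cos {μ t : ℝ} (hμ : μ ≠ 0) (ht : t ∈ Icc 0 π) : G μ (μ * cos t) = μ * phi t / π := by
  rw [G, mul_div_cancel_left₀ _ hμ, g_cos ht, mul_div_assoc]

theorem le_card_filter_natCast_le {x : ℝ} {N : ℕ} (hx : 0 ≤ x) (hxN : x < N + 1) :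
    x ≤ #{m ∈ Finset.range (N + 1) | ((m : ℕ) : ℝ) ≤ x} := by
  have : {m ∈ Finset.range (N + 1) | ((m : ℕ) : ℝ) ≤ x} = Finset.range (⌊x⌋₊ + 1) := by
    ext m
    simp only [Finset.mem_filter, Finset.mem_range, Nat.lt_succ_iff, ← Nat.le_floor_iff hx]
    have : ⌊x⌋₊ ≤ N := Nat.le_of_lt_succ ((Nat.floor_lt hx).2 (by exact_mod_cast hxN))
    omega
  rw [this, Finset.card_range]
  push_cast
  exact (Nat.lt_floor_add_one x).le

theorem card_filter_add_one_le_le_floor {y : ℝ} (K : ℕ) (hy : 0 ≤ y) :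
    (#{i ∈ Finset.range K | ((i : ℕ) : ℝ) + 1 ≤ y} : ℝ) ≤ ⌊y⌋ := by
  rw [← natCast_floor_eq_intCast_floor hy, Nat.cast_le]
  calc #{i ∈ Finset.range K | ((i : ℕ) : ℝ) + 1 ≤ y} ≤ #(Finset.range ⌊y⌋₊) := by
        refine Finset.card_le_card fun i hi => ?_
        rw [Finset.mem_filter] at hi
        rw [Finset.mem_range, Nat.lt_iff_add_one_le, Nat.le_floor_iff hy]
        exact_mod_cast hi.2
    _ = ⌊y⌋₊ := Finset.card_range _

/-- Count the lattice points `(m, i)` with `i + 1 ≤ f m` by rows and by columns. -/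
theorem sum_le_sum_floor {K N : ℕ} {f x : ℕ → ℝ} (hf : ∀ m < N + 1, 0 ≤ f m)
    (hx0 : ∀ i < K, 0 ≤ x i) (hxN : ∀ i < K, x i < N + 1)
    (hxf : ∀ i < K, ∀ m : ℕ, (m : ℝ) ≤ x i → (i : ℝ) + 1 ≤ f m) :
    ∑ i ∈ Finset.range K, x i ≤ ∑ m ∈ Finset.range (N + 1), (⌊f m⌋ : ℝ) := by
  calc ∑ i ∈ Finset.range K, x i
      ≤ ∑ i ∈ Finset.range K, (#{m ∈ Finset.range (N + 1) | ((i : ℕ) : ℝ) + 1 ≤ f m} : ℝ) := by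
        refine Finset.sum_le_sum fun i hi => ?_
        rw [Finset.mem_range] at hi
        refine (le_card_filter_natCast_le (hx0 i hi) (hxN i hi)).trans ?_
        exact_mod_cast Finset.card_le_card (Finset.monotone_filter_right _ fun m _ => hxf i hi m)
    _ = ∑ m ∈ Finset.range (N + 1), (#{i ∈ Finset.range K | ((i : ℕ) : ℝ) + 1 ≤ f m} : ℝ) := by
        simp only [Finset.card_filter, Nat.cast_sum]
        exact Finset.sum_comm
    _ ≤ ∑ m ∈ Finset.range (N + 1), (⌊f m⌋ : ℝ) :=
        Finset.sum_le_sum fun m hm =>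
          card_filter_add_one_le_le_floor K (hf m (Finset.mem_range.1 hm))

theorem two_mul_psi_sub_le_sum {t : ℕ → ℝ} {h : ℝ} (hmem : ∀ i, t i ∈ Icc 0 (π / 2))
    (hmono : Monotone t) (hstep : ∀ i, phi (t (i + 1)) - phi (t i) ≤ h) (n : ℕ) :
    2 * (psi (t n) - psi (t 0))
      ≤ h * (2 * ∑ i ∈ Finset.range n, cos (t i) - cos (t 0) + cos (t n)) := by
  induction n with
  | zero => simp
  | succ n ih =>
    have hcos : ∀ i, 0 ≤ cos (t i) := fun i =>
      cos_nonneg_of_mem_Icc ⟨by linarith [(hmem i).1, pi_pos], (hmem i).2⟩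
    have htrap := two_mul_psi_sub_le (hmem n).1 (hmono n.le_succ)
      (by linarith [(hmem (n + 1)).2, pi_pos])
    have := mul_le_mul_of_nonneg_left (hstep n) (add_nonneg (hcos n) (hcos (n + 1)))
    rw [Finset.sum_range_succ]
    nlinarith

theorem surjOn_phi : SurjOn phi (Icc 0 (π / 2)) (Icc 0 1) := by
  simpa only [SurjOn, phi_zero, phi_pi_div_two] using
    intermediate_value_Icc (div_pos pi_pos two_pos).le differentiable_phi.continuous.continuousOn

noncomputable def phiInv : ℝ → ℝ := Function.invFunOn phi (Icc 0 (π / 2))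

theorem phiInv_mem {y : ℝ} (hy : y ∈ Icc 0 1) : phiInv y ∈ Icc 0 (π / 2) :=
  Function.invFunOn_mem (surjOn_phi hy)

theorem phi_phiInv {y : ℝ} (hy : y ∈ Icc 0 1) : phi (phiInv y) = y :=
  Function.invFunOn_eq (surjOn_phi hy)

theorem strictMonoOn_phi_Icc_pi_div_two : StrictMonoOn phi (Icc 0 (π / 2)) :=
  strictMonoOn_phi.mono (Icc_subset_Icc le_rfl (by linarith [pi_pos]))

theorem monotoneOn_phiInv : MonotoneOn phiInv (Icc 0 1) := fun y hy z hz hyz => by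
  rwa [← strictMonoOn_phi_Icc_pi_div_two.le_iff_le (phiInv_mem hy) (phiInv_mem hz),
    phi_phiInv hy, phi_phiInv hz]

theorem phiInv_one : phiInv 1 = π / 2 :=
  strictMonoOn_phi_Icc_pi_div_two.injOn (phiInv_mem ⟨zero_le_one, le_rfl⟩)
    ⟨by positivity, le_rfl⟩ (by rw [phi_phiInv ⟨zero_le_one, le_rfl⟩, phi_pi_div_two])

/-- The angle `θ` with `G μ (μ * cos θ) = i + 1 / 4`, capped at `π / 2`. -/
noncomputable def node (μ : ℝ) (i : ℕ) : ℝ := phiInv (min (π / μ * (i + 1 / 4)) 1)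

section Nodes

variable {μ : ℝ}

theorem level_mem (hμ : 0 < μ) (i : ℕ) : min (π / μ * (i + 1 / 4)) 1 ∈ Icc 0 1 :=
  ⟨le_min (by positivity) zero_le_one, min_le_right _ _⟩

theorem node_mem (hμ : 0 < μ) (i : ℕ) : node μ i ∈ Icc 0 (π / 2) := phiInv_mem (level_mem hμ i)

theorem monotone_node (hμ : 0 < μ) : Monotone (node μ) := fun i j hij =>
  monotoneOn_phiInv (level_mem hμ i) (level_mem hμ j) (min_le_min_right _ (by gcongr))

theorem phi_node (hμ : 0 < μ) {i : ℕ} (hi : π / μ * (i + 1 / 4) ≤ 1) :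
    phi (node μ i) = π / μ * (i + 1 / 4) := by
  rw [node, phi_phiInv (level_mem hμ i), min_eq_left hi]

theorem node_eq_pi_div_two {i : ℕ} (hi : 1 ≤ π / μ * (i + 1 / 4)) : node μ i = π / 2 := by
  rw [node, min_eq_right hi, phiInv_one]

theorem phi_node_succ_sub_le (hμ : 0 < μ) (i : ℕ) :
    phi (node μ (i + 1)) - phi (node μ i) ≤ π / μ := by
  rw [node, node, phi_phiInv (level_mem hμ _), phi_phiInv (level_mem hμ _)]
  have : π / μ * ((i + 1 : ℕ) + 1 / 4 : ℝ) = π / μ * (i + 1 / 4) + π / μ := by push_cast; ring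
  rw [this]
  have := div_pos pi_pos hμ
  rcases le_total (π / μ * (i + 1 / 4)) 1 with h | h
  · rw [min_eq_left h]
    linarith [min_le_left (π / μ * (i + 1 / 4) + π / μ) 1]
  · rw [min_eq_right h, min_eq_right (by linarith)]
    linarith

theorem level_le_one (hμ : 0 < μ) {i : ℕ} (hi : i < ⌊μ / π + 3 / 4⌋₊) :
    π / μ * (i + 1 / 4) ≤ 1 := by
  have : (i : ℝ) + 1 ≤ μ / π + 3 / 4 := by
    exact_mod_cast (Nat.le_floor_iff (by positivity)).1 hi
  rw [div_mul_eq_mul_div, div_le_one hμ]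
  have := (le_div_iff₀' pi_pos).1 (show (i : ℝ) + 1 / 4 ≤ μ / π by linarith)
  linarith

theorem G_mul_cos_node (hμ : 0 < μ) {i : ℕ} (hi : i < ⌊μ / π + 3 / 4⌋₊) :
    G μ (μ * cos (node μ i)) = i + 1 / 4 := by
  have hmem := node_mem hμ i
  rw [G_mul_cos hμ.ne' ⟨hmem.1, hmem.2.trans (by linarith [pi_pos])⟩,
    phi_node hμ (level_le_one hμ hi)]
  field_simp

theorem mul_sum_cos_node_le_sum_floor (hμ : 0 < μ) :
    μ * ∑ i ∈ Finset.range ⌊μ / π + 3 / 4⌋₊, cos (node μ i)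
      ≤ ∑ m ∈ Finset.range (⌊μ⌋₊ + 1), (⌊G μ m + 3 / 4⌋ : ℝ) := by
  have hcos : ∀ i, cos (node μ i) ∈ Icc 0 1 := fun i =>
    ⟨cos_nonneg_of_mem_Icc ⟨by linarith [(node_mem hμ i).1, pi_pos], (node_mem hμ i).2⟩,
      cos_le_one _⟩
  have hle : ∀ i, μ * cos (node μ i) ≤ μ := fun i => mul_le_of_le_one_right hμ.le (hcos i).2
  have hμN : μ < ⌊μ⌋₊ + 1 := Nat.lt_floor_add_one μ
  rw [Finset.mul_sum]
  refine sum_le_sum_floor (fun m hm => ?_) (fun i _ => mul_nonneg hμ.le (hcos i).1)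
    (fun i _ => (hle i).trans_lt hμN) (fun i hi m hm => ?_)
  · have : (m : ℝ) ≤ μ := (Nat.le_floor_iff hμ.le).1 (Nat.lt_succ_iff.1 hm)
    linarith [G_nonneg hμ ⟨m.cast_nonneg, this⟩]
  · have := antitoneOn_G hμ ⟨m.cast_nonneg, hm.trans (hle i)⟩
      ⟨mul_nonneg hμ.le (hcos i).1, hle i⟩ hm
    rw [G_mul_cos_node hμ hi] at this
    linarith

theorem le_two_mul_sum_cos_node (hμ : 0 < μ) :
    μ * cos (node μ 0) + μ ^ 2 / 4 - 2 * μ ^ 2 * psi (node μ 0) / π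
      ≤ 2 * μ * ∑ i ∈ Finset.range ⌊μ / π + 3 / 4⌋₊, cos (node μ i) := by
  set K := ⌊μ / π + 3 / 4⌋₊
  have hK : node μ K = π / 2 := by
    refine node_eq_pi_div_two ?_
    have := Nat.lt_floor_add_one (μ / π + 3 / 4)
    rw [div_mul_eq_mul_div, one_le_div hμ]
    have := (div_le_iff₀' pi_pos).1 (show μ / π ≤ K + 1 / 4 by linarith)
    linarith
  have h := two_mul_psi_sub_le_sum (node_mem hμ) (monotone_node hμ) (phi_node_succ_sub_le hμ) K
  rw [hK, psi_pi_div_two, cos_pi_div_two] at h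
  have := mul_le_mul_of_nonneg_left h (by positivity : 0 ≤ μ ^ 2 / π)
  have e1 : μ ^ 2 / π * (2 * (π / 8 - psi (node μ 0)))
      = μ ^ 2 / 4 - 2 * μ ^ 2 * psi (node μ 0) / π := by
    field_simp
    ring
  have e2 : ∀ X, μ ^ 2 / π * (π / μ * X) = μ * X := fun X => by field_simp
  rw [e1, e2] at this
  linarith

end Nodes

noncomputable def psiRatio (u : ℝ) : ℝ :=
  (1 + u ^ 2 / 20) ^ 3 / 2 - u ^ 2 * (1 + u ^ 2 / 20) ^ 5 / 5 + u ^ 4 * (1 + u ^ 2 / 20) ^ 7 / 35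

noncomputable def margin (u : ℝ) : ℝ :=
  (1 - (u * (1 + u ^ 2 / 20)) ^ 2 / 2 + (u * (1 + u ^ 2 / 20)) ^ 4 / 24
    - (u * (1 + u ^ 2 / 20)) ^ 6 / 720) - psiRatio u - 0.0014

theorem taylor7_mul_eq_psiRatio (u : ℝ) :
    3 * ((u * (1 + u ^ 2 / 20)) ^ 3 / 3 - 2 * (u * (1 + u ^ 2 / 20)) ^ 5 / 15
      + 2 * (u * (1 + u ^ 2 / 20)) ^ 7 / 105) = 2 * u ^ 3 * psiRatio u := by
  unfold psiRatio
  ring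

theorem sub_mul_pow_nonneg {a u : ℝ} (hu : 0 ≤ u) (hua : u ≤ a) (k : ℕ) : 0 ≤ (a - u) * u ^ k :=
  mul_nonneg (sub_nonneg.2 hua) (pow_nonneg hu k)

theorem cube_div_three_le_phi_bound {u : ℝ} (hu : 0 ≤ u) (hua : u ≤ 0.58123) :
    u ^ 3 / 3 ≤ (u * (1 + u ^ 2 / 20)) ^ 3 / 3 - (u * (1 + u ^ 2 / 20)) ^ 5 / 24 := by
  have h := sub_mul_pow_nonneg hu hua
  nlinarith [h 5, h 7, h 9, h 11, h 13, h 15, pow_nonneg hu 5]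

theorem margin_ge_of_le_0_561 {u : ℝ} (hu : 0 ≤ u) (hua : u ≤ 0.561) :
    0.31831 * (1 + u ^ 3) ≤ margin u := by
  unfold margin psiRatio
  have h := sub_mul_pow_nonneg hu hua
  nlinarith [h 1, h 3, h 5, h 7, h 9, h 11, h 13, h 15, h 17]

theorem margin_ge_of_le_0_58123 {u : ℝ} (hu : 0 ≤ u) (hua : u ≤ 0.58123) :
    16 / 3 * 0.31831 * u ^ 3 ≤ margin u := by
  unfold margin psiRatio
  have h := sub_mul_pow_nonneg hu hua
  nlinarith [h 1, h 3, h 5, h 7, h 9, h 11, h 13, h 15, h 17]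

theorem div_pi_le {x : ℝ} (hx : 0 ≤ x) : x / π ≤ 0.31831 * x := by
  rw [div_le_iff₀ pi_pos]
  nlinarith [pi_gt_d6]

theorem floor_le_mul_margin {μ u : ℝ} (hμ0 : 0 < μ) (hu0 : 0 < u) (hu : 4 * μ * u ^ 3 = 3 * π)
    (hu' : u ≤ 0.58123) : (⌊μ / π + 3 / 4⌋₊ : ℝ) ≤ μ * margin u := by
  have h3 : 3 / 4 = μ * u ^ 3 / π := by field_simp; linarith
  -- Below `μ = 4.25 π` the floor is `4`, and `⌊x⌋₊ ≤ x` alone is too weak near `μ = 12`.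
  rcases le_or_gt μ 13.35 with hsmall | hlarge
  · have hK : ⌊μ / π + 3 / 4⌋₊ ≤ 4 := by
      refine Nat.lt_succ_iff.1 ((Nat.floor_lt (by positivity)).2 ?_)
      rw [div_add' _ _ _ pi_ne_zero, div_lt_iff₀ pi_pos]
      push_cast
      linarith [pi_gt_d6]
    have h4 : (4 : ℝ) = μ * (16 * u ^ 3 / 3) / π := by field_simp; linarith
    calc (⌊μ / π + 3 / 4⌋₊ : ℝ) ≤ 4 := by exact_mod_cast hK
      _ = μ * (16 * u ^ 3 / 3) / π := h4
      _ ≤ μ * margin u := by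
        rw [mul_div_assoc]
        refine mul_le_mul_of_nonneg_left ?_ hμ0.le
        refine (div_pi_le (by positivity)).trans ?_
        linarith [margin_ge_of_le_0_58123 hu0.le hu']
  · have hu' : u ≤ 0.561 :=
      le_of_pow_le_pow_left₀ three_ne_zero (by norm_num)
        (by nlinarith [mul_nonneg (sub_nonneg.2 hlarge.le) (pow_nonneg hu0.le 3), pi_lt_d6])
    calc (⌊μ / π + 3 / 4⌋₊ : ℝ) ≤ μ / π + 3 / 4 := Nat.floor_le (by positivity)
      _ = μ * ((1 + u ^ 3) / π) := by rw [h3]; ring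
      _ ≤ μ * margin u := by
        refine mul_le_mul_of_nonneg_left ?_ hμ0.le
        exact (div_pi_le (by positivity)).trans (margin_ge_of_le_0_561 hu0.le hu')

theorem floor_add_le_first_node {μ : ℝ} (hμ : 12 ≤ μ) :
    0.0014 * μ + ⌊μ / π + 3 / 4⌋₊ ≤ μ * cos (node μ 0) - 2 * μ ^ 2 * psi (node μ 0) / π := by
  have hμ0 : 0 < μ := by linarith
  obtain ⟨u, hu0, hu⟩ : ∃ u, 0 < u ∧ 4 * μ * u ^ 3 = 3 * π := by
    refine ⟨(3 * π / (4 * μ)) ^ ((3 : ℕ) : ℝ)⁻¹, by positivity, ?_⟩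
    rw [rpow_inv_natCast_pow (by positivity) three_ne_zero]
    field_simp
  have hu' : u ≤ 0.58123 :=
    le_of_pow_le_pow_left₀ three_ne_zero (by norm_num)
      (by nlinarith [mul_nonneg (sub_nonneg.2 hμ) (pow_nonneg hu0.le 3), pi_lt_d6])
  -- `φ t ≈ t ^ 3 / 3 - t ^ 5 / 30`, so `τ` lies just above the solution `t ≈ u (1 + u ^ 2 / 30)`
  -- of `φ t = u ^ 3 / 3`.
  set τ := u * (1 + u ^ 2 / 20) with hτ_def
  have hτ : τ ∈ Icc 0 (π / 2) := ⟨by positivity, by nlinarith [pi_gt_three]⟩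
  have ht := node_mem hμ0 0
  have hphi : phi (node μ 0) = u ^ 3 / 3 := by
    have hK : 0 < ⌊μ / π + 3 / 4⌋₊ :=
      Nat.floor_pos.2 (by linarith [(one_le_div pi_pos).2 (by linarith [pi_lt_four] : π ≤ μ)])
    rw [phi_node hμ0 (level_le_one hμ0 hK), Nat.cast_zero]
    field_simp
    linarith
  have ht_le : node μ 0 ≤ τ := by
    rw [← strictMonoOn_phi_Icc_pi_div_two.le_iff_le ht hτ, hphi]
    exact (cube_div_three_le_phi_bound hu0.le hu').trans (cube_div_three_sub_le_phi hτ.1)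
  have hcos := (taylor6_le_cos hτ.1).trans
    (cos_le_cos_of_nonneg_of_le_pi ht.1 (hτ.2.trans (by linarith [pi_pos])) ht_le)
  have hpsi := (monotoneOn_psi ht hτ ht_le).trans (psi_le_taylor7 hτ.1)
  have hratio : 2 * μ ^ 2 * (τ ^ 3 / 3 - 2 * τ ^ 5 / 15 + 2 * τ ^ 7 / 105) / π
      = μ * psiRatio u := by
    rw [div_eq_iff pi_ne_zero]
    linear_combination (2 * μ ^ 2 / 3) * taylor7_mul_eq_psiRatio u + (μ * psiRatio u / 3) * hu
  have hK := floor_le_mul_margin hμ0 hu0 hu hu'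
  have h1 := mul_le_mul_of_nonneg_left hcos hμ0.le
  have h2 : 2 * μ ^ 2 * psi (node μ 0) / π
      ≤ 2 * μ ^ 2 * (τ ^ 3 / 3 - 2 * τ ^ 5 / 15 + 2 * τ ^ 7 / 105) / π := by gcongr
  rw [margin, ← hτ_def] at hK
  linarith

end DiskLattice

open DiskLattice

/-- Theorem 1.5: for every `μ ≥ 12`, `𝒫^N_2(μ) ≥ μ²/4 + 0.0014·μ` (improvement
of the Neumann Pólya conjecture for the unit disk). -/
theorem stmt7 (μ : ℝ) (hμ : 12 ≤ μ) : latticePN2 μ ≥ μ ^ 2 / 4 + 0.0014 * μ := by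
  have hμ0 : 0 < μ := by linarith
  have hcount := mul_sum_cos_node_le_sum_floor hμ0
  have htrapezoid := le_two_mul_sum_cos_node hμ0
  have hfirst := floor_add_le_first_node hμ
  rw [latticePN2, ← natCast_floor_eq_intCast_floor (by positivity)]
  linarith
end

section
/- Let L > 0 and μ > 0 with Lμ/π ≥ 1. Then Σ_{l=1}^{⌊Lμ/π⌋} (μ² − (πl/L)²) ≤ (2L/(3π))·μ³ − (π²/(2L²))·⌊Lμ/π⌋·(⌊Lμ/π⌋ + 1/3). -/
/-!
Writing `a = π / L` and `x = μ / a`, the left side is `a² (n x² − n(n+1)(2n+1)/6)` by the sum of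
squares, and the claim reduces to `3 x² n ≤ 2 x³ + n³`, which is AM-GM for `x, x, n`. In particular
it holds for every number of terms `n`, not only for `n = ⌊Lμ/π⌋`.
-/

open Finset

lemma sum_Icc_one_sq (n : ℕ) :
    ∑ l ∈ Icc 1 n, (l : ℝ) ^ 2 = n * (n + 1) * (2 * n + 1) / 6 := by
  induction n with
  | zero => simp
  | succ k ih =>
    rw [sum_Icc_succ_top (by omega), ih]
    push_cast
    ring

lemma three_mul_sq_mul_le {x y : ℝ} (hx : 0 ≤ x) (hy : 0 ≤ y) :
    3 * (x ^ 2 * y) ≤ 2 * x ^ 3 + y ^ 3 := by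
  have key : 2 * x ^ 3 + y ^ 3 - 3 * (x ^ 2 * y) = (x - y) ^ 2 * (2 * x + y) := by ring
  linarith [mul_nonneg (sq_nonneg (x - y)) (by positivity : 0 ≤ 2 * x + y)]

lemma sum_Icc_one_sq_sub_sq (μ a : ℝ) (n : ℕ) :
    ∑ l ∈ Icc 1 n, (μ ^ 2 - (a * l) ^ 2) = n * μ ^ 2 - a ^ 2 * (n * (n + 1) * (2 * n + 1) / 6) := by
  simp only [sum_sub_distrib, sum_const, Nat.card_Icc, add_tsub_cancel_right, nsmul_eq_mul, mul_pow,
    ← mul_sum, sum_Icc_one_sq]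

theorem sum_Icc_one_sq_sub_sq_le {μ a : ℝ} (hμ : 0 ≤ μ) (ha : 0 < a) (n : ℕ) :
    ∑ l ∈ Icc 1 n, (μ ^ 2 - (a * l) ^ 2) ≤ 2 / (3 * a) * μ ^ 3 - a ^ 2 / 2 * n * (n + 1 / 3) := by
  rw [sum_Icc_one_sq_sub_sq, ← sub_nonneg]
  have amgm := three_mul_sq_mul_le hμ (by positivity : 0 ≤ a * n)
  have gap : 2 / (3 * a) * μ ^ 3 - a ^ 2 / 2 * n * (n + 1 / 3)
      - (n * μ ^ 2 - a ^ 2 * (n * (n + 1) * (2 * n + 1) / 6))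
      = (2 * μ ^ 3 + (a * n) ^ 3 - 3 * (μ ^ 2 * (a * n))) / (3 * a) := by
    field_simp
    ring
  rw [gap]
  exact div_nonneg (by linarith) (by positivity)

theorem stmt13_general (L μ : ℝ) (hL : 0 < L) (hμ : 0 < μ) :
    ∑ l ∈ Finset.Icc 1 ⌊L * μ / Real.pi⌋₊, (μ ^ 2 - (Real.pi * (l : ℝ) / L) ^ 2) ≤
      2 * L / (3 * Real.pi) * μ ^ 3
      - Real.pi ^ 2 / (2 * L ^ 2) * (⌊L * μ / Real.pi⌋₊ : ℝ)
          * ((⌊L * μ / Real.pi⌋₊ : ℝ) + 1 / 3) := by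
  have hL' : 2 * L / (3 * Real.pi) = 2 / (3 * (Real.pi / L)) := by field_simp
  have hπL : Real.pi ^ 2 / (2 * L ^ 2) = (Real.pi / L) ^ 2 / 2 := by field_simp
  simp only [mul_div_right_comm Real.pi, hL', hπL]
  exact sum_Icc_one_sq_sub_sq_le hμ.le (by positivity) _

/-- For `L > 0`, `μ > 0` with `Lμ/π ≥ 1`:
`Σ_{l=1}^{⌊Lμ/π⌋} (μ² − (πl/L)²) ≤ (2L/(3π))μ³ − (π²/(2L²))⌊Lμ/π⌋(⌊Lμ/π⌋ + 1/3)`. -/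
theorem stmt13 (L μ : ℝ) (hL : 0 < L) (hμ : 0 < μ) (h : 1 ≤ L * μ / Real.pi) :
    ∑ l ∈ Finset.Icc 1 ⌊L * μ / Real.pi⌋₊, (μ ^ 2 - (Real.pi * (l : ℝ) / L) ^ 2) ≤
      2 * L / (3 * Real.pi) * μ ^ 3
      - Real.pi ^ 2 / (2 * L ^ 2) * (⌊L * μ / Real.pi⌋₊ : ℝ)
          * ((⌊L * μ / Real.pi⌋₊ : ℝ) + 1 / 3) :=
  stmt13_general L μ hL hμ
end

section
/- Let d ≥ 4 be an integer and let L, μ > 0. Set σ = Lμ/π and σ' = Lμ/(π√(d−2)), and suppose σ' ≥ 1. Let A₁ = (d−3)/4 if d ≥ 5 and A₁ = 2/3 if d = 4. Then Σ_{l=1}^{⌊σ⌋} (1 − (l/σ)²)^{(d−1)/2} ≤ ∫_0^σ (1 − (x/σ)²)^{(d−1)/2} dx − ((d−1)/4)·(⌊σ'⌋/σ)²·(1 − A₁·(⌊σ'⌋/σ)²). -/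
/-!
Write `f(x) = (1 - (x/σ)²)^p` with `p = (d-1)/2`. It is decreasing on `[0, σ]`, so
`f(l) ≤ ∫_{l-1}^{l} f`, and it is concave on `[0, σ/√(2p-1)] = [0, σ']`, where the trapezoid
rule improves this comparison. Summing, the first `m = ⌊σ'⌋` intervals gain
`(f 0 - f m)/2 = (1 - (1-t)^p)/2` with `t = (m/σ)²`, and the second-order bound
`(1-t)^p ≤ 1 - pt + p(p-1)t²/2` (for `p ≥ 2`; via `√(1-t) ≤ 1 - t/2` for `p = 3/2`)
turns this gain into the stated correction term.
-/

open Set Finset MeasureTheory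

theorem integral_linear_interpolation (a b u v : ℝ) :
    ∫ x in a..b, (u * (b - x) + v * (x - a)) = (b - a) ^ 2 / 2 * (u + v) := by
  have hmul : ∀ c : ℝ, ∫ x in a..b, c * x = c * ((b ^ 2 - a ^ 2) / 2) := fun c => by
    rw [intervalIntegral.integral_const_mul, integral_id]
  have hint : ∀ g : ℝ → ℝ, Continuous g → IntervalIntegrable g volume a b :=
    fun g hg => hg.intervalIntegrable a b
  simp only [mul_sub]
  rw [intervalIntegral.integral_add (hint _ (by fun_prop)) (hint _ (by fun_prop)),
    intervalIntegral.integral_sub (hint _ (by fun_prop)) (hint _ (by fun_prop)),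
    intervalIntegral.integral_sub (hint _ (by fun_prop)) (hint _ (by fun_prop)), hmul, hmul]
  simp only [intervalIntegral.integral_const, smul_eq_mul]
  ring

theorem ConcaveOn.trapezoid_le_integral {f : ℝ → ℝ} {a b : ℝ} (hab : a ≤ b)
    (hf : ConcaveOn ℝ (Icc a b) f) (hfc : ContinuousOn f (Icc a b)) :
    (b - a) * ((f a + f b) / 2) ≤ ∫ x in a..b, f x := by
  rcases hab.eq_or_lt with rfl | hab
  · simp
  have hba : 0 < b - a := sub_pos.2 hab
  have hchord : ∀ x ∈ Icc a b, (f a * (b - x) + f b * (x - a)) / (b - a) ≤ f x := by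
    rintro x ⟨hax, hxb⟩
    have h := hf.2 (left_mem_Icc.2 hab.le) (right_mem_Icc.2 hab.le)
      (div_nonneg (sub_nonneg.2 hxb) hba.le) (div_nonneg (sub_nonneg.2 hax) hba.le)
      (by field_simp; ring)
    simp only [smul_eq_mul] at h
    rw [show (b - x) / (b - a) * a + (x - a) / (b - a) * b = x by field_simp; ring] at h
    calc (f a * (b - x) + f b * (x - a)) / (b - a)
        = (b - x) / (b - a) * f a + (x - a) / (b - a) * f b := by field_simp
      _ ≤ f x := h
  calc (b - a) * ((f a + f b) / 2)
      = ∫ x in a..b, (f a * (b - x) + f b * (x - a)) / (b - a) := by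
        rw [intervalIntegral.integral_div, integral_linear_interpolation]
        field_simp
    _ ≤ ∫ x in a..b, f x :=
        intervalIntegral.integral_mono_on hab.le
          ((by fun_prop : Continuous fun x => _).intervalIntegrable a b)
          (hfc.intervalIntegrable_of_Icc hab.le) hchord

theorem ConcaveOn.sum_trapezoid_le_integral {f : ℝ → ℝ} {x₀ : ℝ} {a : ℕ}
    (hf : ConcaveOn ℝ (Icc x₀ (x₀ + a)) f) (hfc : ContinuousOn f (Icc x₀ (x₀ + a))) :
    ∑ i ∈ range a, (f (x₀ + i) + f (x₀ + ↑(i + 1))) / 2 ≤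
      ∫ x in x₀..x₀ + a, f x := by
  have hsub : ∀ i ∈ range a, Icc (x₀ + i) (x₀ + ↑(i + 1)) ⊆ Icc x₀ (x₀ + a) := by
    intro i hi
    have : ((i + 1 : ℕ) : ℝ) ≤ a := by exact_mod_cast mem_range.1 hi
    exact Icc_subset_Icc (by simp) (by linarith)
  calc ∑ i ∈ range a, (f (x₀ + i) + f (x₀ + ↑(i + 1))) / 2
      ≤ ∑ i ∈ range a, ∫ x in x₀ + i..x₀ + ↑(i + 1), f x := by
        gcongr with i hi
        have h := (hf.subset (hsub i hi) (convex_Icc _ _)).trapezoid_le_integral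
          (by push_cast; linarith) (hfc.mono (hsub i hi))
        simpa using h
    _ = ∫ x in x₀..x₀ + a, f x := by
        convert intervalIntegral.sum_integral_adjacent_intervals (μ := volume)
          (a := fun i : ℕ => x₀ + i) fun i hi =>
            (hfc.mono (hsub i (mem_range.2 hi))).intervalIntegrable_of_Icc
              (by push_cast; linarith) using 1
        simp

theorem sum_Icc_floor_add_le_integral {f : ℝ → ℝ} {σ : ℝ} {m : ℕ} (hσ : 0 ≤ σ)
    (hm : m ≤ ⌊σ⌋₊) (hcont : ContinuousOn f (Icc 0 σ)) (hanti : AntitoneOn f (Icc 0 σ))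
    (hfσ : 0 ≤ f σ) (hconc : ConcaveOn ℝ (Icc 0 (m : ℝ)) f) :
    ∑ l ∈ Icc 1 ⌊σ⌋₊, f l + (f 0 - f m) / 2 ≤ ∫ x in (0 : ℝ)..σ, f x := by
  set n := ⌊σ⌋₊
  have hnσ : (n : ℝ) ≤ σ := Nat.floor_le hσ
  have hmn : (m : ℝ) ≤ n := by exact_mod_cast hm
  have hint : ∀ a b, 0 ≤ a → a ≤ b → b ≤ σ → IntervalIntegrable f volume a b :=
    fun a b ha hab hb => (hcont.mono (Icc_subset_Icc ha hb)).intervalIntegrable_of_Icc hab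
  have htrapezoid :
      ∑ i ∈ range m, f (i + 1 : ℕ) + (f 0 - f m) / 2 ≤ ∫ x in 0..(m : ℝ), f x := by
    have h := ConcaveOn.sum_trapezoid_le_integral (x₀ := 0) (a := m) (by simpa using hconc)
      (by simpa using hcont.mono (Icc_subset_Icc le_rfl (hmn.trans hnσ)))
    have htel := sum_range_sub (fun i : ℕ => f i) m
    simp only [zero_add, Nat.cast_zero] at h htel
    have hsplit : ∑ i ∈ range m, (f i + f (i + 1 : ℕ)) / 2 =
        ∑ i ∈ range m, f (i + 1 : ℕ) - (∑ i ∈ range m, (f (i + 1 : ℕ) - f i)) / 2 := by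
      rw [sum_div, ← sum_sub_distrib]
      exact sum_congr rfl fun i _ => by ring
    linarith
  have hright : ∑ i ∈ Ico m n, f (i + 1 : ℕ) ≤ ∫ x in (m : ℝ)..n, f x :=
    AntitoneOn.sum_le_integral_Ico hm (hanti.mono (Icc_subset_Icc (Nat.cast_nonneg m) hnσ))
  have htail : 0 ≤ ∫ x in (n : ℝ)..σ, f x :=
    intervalIntegral.integral_nonneg hnσ fun x hx =>
      hfσ.trans (hanti ⟨(Nat.cast_nonneg n).trans hx.1, hx.2⟩ ⟨hσ, le_rfl⟩ hx.2)
  have hsum : ∑ l ∈ Icc 1 n, f l =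
      ∑ i ∈ range m, f (i + 1 : ℕ) + ∑ i ∈ Ico m n, f (i + 1 : ℕ) := by
    rw [sum_range_add_sum_Ico _ hm, ← Finset.Ico_add_one_right_eq_Icc,
      sum_Ico_eq_sum_range]
    simp [add_comm]
  have h0n := intervalIntegral.integral_add_adjacent_intervals
    (hint 0 m le_rfl (Nat.cast_nonneg m) (hmn.trans hnσ)) (hint m n (Nat.cast_nonneg m) hmn hnσ)
  have h0σ := intervalIntegral.integral_add_adjacent_intervals
    (hint 0 n le_rfl (Nat.cast_nonneg n) hnσ) (hint n σ (Nat.cast_nonneg n) hnσ le_rfl)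
  linarith

noncomputable def sliceProfile (σ p x : ℝ) : ℝ := (1 - (x / σ) ^ 2) ^ p

theorem continuous_sliceProfile {σ p : ℝ} (hp : 0 ≤ p) : Continuous (sliceProfile σ p) :=
  (Real.continuous_rpow_const hp).comp (by fun_prop)

theorem antitoneOn_sliceProfile {σ p : ℝ} (hp : 0 ≤ p) :
    AntitoneOn (sliceProfile σ p) (Icc 0 σ) := by
  rintro x ⟨hx0, hxσ⟩ y ⟨hy0, hyσ⟩ hxy
  have hσ : 0 ≤ σ := hx0.trans hxσ
  have hyx : (x / σ) ^ 2 ≤ (y / σ) ^ 2 :=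
    pow_le_pow_left₀ (div_nonneg hx0 hσ) (div_le_div_of_nonneg_right hxy hσ) 2
  have hy1 : (y / σ) ^ 2 ≤ 1 := pow_le_one₀ (div_nonneg hy0 hσ) (div_le_one_of_le₀ hyσ hσ)
  exact Real.rpow_le_rpow (by linarith) (by linarith) hp

theorem hasDerivAt_one_sub_div_sq_rpow {σ x : ℝ} (q : ℝ) (hx : 1 - (x / σ) ^ 2 ≠ 0) :
    HasDerivAt (fun x => (1 - (x / σ) ^ 2) ^ q)
      (-(2 * x / σ ^ 2) * q * (1 - (x / σ) ^ 2) ^ (q - 1)) x := by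
  have hu : HasDerivAt (fun x => 1 - (x / σ) ^ 2) (-(2 * x / σ ^ 2)) x := by
    refine ((((hasDerivAt_id' x).div_const σ).pow 2).const_sub 1).congr_deriv ?_
    field_simp
    ring
  exact hu.rpow_const (Or.inl hx)

theorem concaveOn_sliceProfile {σ p c : ℝ} (hp : 1 ≤ p) (hc : (2 * p - 1) * c ^ 2 ≤ σ ^ 2) :
    ConcaveOn ℝ (Icc 0 c) (sliceProfile σ p) := by
  have hsmall : ∀ x ∈ interior (Icc 0 c), (2 * p - 1) * (x / σ) ^ 2 < 1 := by
    intro x hx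
    rw [interior_Icc] at hx
    have hxc : x ^ 2 < c ^ 2 := pow_lt_pow_left₀ hx.2 hx.1.le two_ne_zero
    have hσ : 0 < σ ^ 2 := by nlinarith
    rw [div_pow, mul_div_assoc', div_lt_one hσ]
    nlinarith
  have hpos : ∀ x ∈ interior (Icc 0 c), 0 < 1 - (x / σ) ^ 2 := fun x hx => by
    nlinarith [hsmall x hx, sq_nonneg (x / σ)]
  refine concaveOn_of_hasDerivWithinAt2_nonpos (convex_Icc 0 c)
    (continuous_sliceProfile (by linarith)).continuousOn
    (f' := fun x => -(2 * p / σ ^ 2) * (x * (1 - (x / σ) ^ 2) ^ (p - 1)))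
    (f'' := fun x => -(2 * p / σ ^ 2) *
      ((1 - (x / σ) ^ 2) ^ (p - 2) * (1 - (2 * p - 1) * (x / σ) ^ 2)))
    (fun x hx => ?_) (fun x hx => ?_) (fun x hx => ?_)
  · refine ((hasDerivAt_one_sub_div_sq_rpow p (hpos x hx).ne').congr_deriv ?_).hasDerivWithinAt
    ring
  · have hne := (hpos x hx).ne'
    refine ((((hasDerivAt_id x).mul (hasDerivAt_one_sub_div_sq_rpow (p - 1) hne)).const_mul
      (-(2 * p / σ ^ 2))).congr_deriv ?_).hasDerivWithinAt
    rw [show p - 1 - 1 = p - 2 by ring, show p - 1 = p - 2 + 1 by ring, Real.rpow_add_one hne]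
    simp only [id]
    ring
  · exact mul_nonpos_of_nonpos_of_nonneg
      (neg_nonpos.2 (div_nonneg (by linarith) (sq_nonneg σ)))
      (mul_nonneg (Real.rpow_nonneg (hpos x hx).le _) (by linarith [hsmall x hx]))

theorem one_sub_rpow_three_halves_le {t : ℝ} (ht0 : 0 ≤ t) (ht1 : t ≤ 1) :
    (1 - t) ^ ((3 : ℝ) / 2) ≤ 1 - 3 / 2 * t + t ^ 2 := by
  have hsqrt : √(1 - t) ≤ 1 - t / 2 :=
    Real.sqrt_le_iff.2 ⟨by linarith, by nlinarith⟩
  have hcube : (1 - t) ^ ((3 : ℝ) / 2) = √(1 - t) ^ 3 := by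
    rw [Real.sqrt_eq_rpow, ← Real.rpow_natCast, ← Real.rpow_mul (by linarith)]
    norm_num
  rw [hcube]
  nlinarith [pow_le_pow_left₀ (Real.sqrt_nonneg _) hsqrt 3, pow_nonneg ht0 3]

theorem one_sub_rpow_le_of_two_le {p t : ℝ} (hp : 2 ≤ p) (ht0 : 0 ≤ t) (ht1 : t ≤ 1) :
    (1 - t) ^ p ≤ 1 - p * t + p * (p - 1) / 2 * t ^ 2 := by
  set g : ℝ → ℝ := fun s => 1 - p * s + p * (p - 1) / 2 * s ^ 2 - (1 - s) ^ p
  have hg : ∀ s, HasDerivAt g (-p + p * (p - 1) * s + p * (1 - s) ^ (p - 1)) s := by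
    intro s
    have h := (((hasDerivAt_id s).const_mul p).const_sub 1).add
      ((hasDerivAt_pow 2 s).const_mul (p * (p - 1) / 2)) |>.sub
      (((hasDerivAt_id s).const_sub 1).rpow_const (p := p) (Or.inr (by linarith)))
    refine h.congr_deriv ?_
    simp only [id]
    push_cast
    ring
  have hmono : MonotoneOn g (Icc 0 1) := by
    refine monotoneOn_of_deriv_nonneg (convex_Icc 0 1)
      (fun x _ => (hg x).continuousAt.continuousWithinAt)
      (fun x _ => (hg x).differentiableAt.differentiableWithinAt) fun x hx => ?_
    rw [interior_Icc] at hx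
    rw [(hg x).deriv]
    have hbernoulli : 1 + (p - 1) * -x ≤ (1 + -x) ^ (p - 1) :=
      one_add_mul_self_le_rpow_one_add (by linarith [hx.2]) (by linarith)
    rw [← sub_eq_add_neg] at hbernoulli
    nlinarith [hx.1, hx.2]
  have := hmono (left_mem_Icc.2 zero_le_one) ⟨ht0, ht1⟩ ht0
  simp only [g, mul_zero, sub_zero, add_zero, zero_pow two_ne_zero, Real.one_rpow,
    sub_self, sub_nonneg] at this
  linarith

theorem quadratic_le_one_sub_one_sub_rpow {d : ℕ} (hd : 4 ≤ d) {t : ℝ} (ht0 : 0 ≤ t)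
    (ht1 : t ≤ 1) :
    ((d : ℝ) - 1) / 4 * t * (1 - (if 5 ≤ d then ((d : ℝ) - 3) / 4 else 2 / 3) * t) ≤
      (1 - (1 - t) ^ (((d : ℝ) - 1) / 2)) / 2 := by
  split_ifs with hd5
  · have hd5' : (5 : ℝ) ≤ d := by exact_mod_cast hd5
    have := one_sub_rpow_le_of_two_le (p := ((d : ℝ) - 1) / 2) (by linarith) ht0 ht1
    linarith
  · obtain rfl : d = 4 := by omega
    have := one_sub_rpow_three_halves_le ht0 ht1
    rw [show ((4 : ℕ) : ℝ) = 4 by norm_num, show ((4 : ℝ) - 1) / 2 = 3 / 2 by norm_num]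
    nlinarith

theorem stmt14_general (d : ℕ) (hd : 4 ≤ d) (L μ : ℝ)
    (σ σ' A₁ : ℝ)
    (hσ : σ = L * μ / Real.pi)
    (hσ' : σ' = L * μ / (Real.pi * Real.sqrt ((d : ℝ) - 2)))
    (hσ'1 : 1 ≤ σ')
    (hA₁ : A₁ = if 5 ≤ d then ((d : ℝ) - 3) / 4 else 2 / 3) :
    ∑ l ∈ Finset.Icc 1 ⌊σ⌋₊, (1 - ((l : ℝ) / σ) ^ 2) ^ (((d : ℝ) - 1) / 2) ≤
      (∫ x in (0 : ℝ)..σ, (1 - (x / σ) ^ 2) ^ (((d : ℝ) - 1) / 2))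
      - ((d : ℝ) - 1) / 4 * ((⌊σ'⌋₊ : ℝ) / σ) ^ 2 * (1 - A₁ * ((⌊σ'⌋₊ : ℝ) / σ) ^ 2) := by
  have hd4 : (4 : ℝ) ≤ d := by exact_mod_cast hd
  have hσσ' : σ = √((d : ℝ) - 2) * σ' := by
    rw [hσ, hσ']
    field_simp [Real.pi_pos.ne', (Real.sqrt_pos.2 (by linarith : (0 : ℝ) < d - 2)).ne']
  have hsqrt : 1 ≤ √((d : ℝ) - 2) := Real.one_le_sqrt.2 (by linarith)
  have hσpos : 0 < σ := by rw [hσσ']; positivity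
  set m := ⌊σ'⌋₊
  have hmσ' : (m : ℝ) ≤ σ' := Nat.floor_le (by linarith)
  have hm : m ≤ ⌊σ⌋₊ := Nat.floor_mono (by rw [hσσ']; nlinarith)
  have hdm : ((d : ℝ) - 2) * m ^ 2 ≤ σ ^ 2 := by
    rw [hσσ', mul_pow, Real.sq_sqrt (by linarith)]
    gcongr
    linarith
  have key := sum_Icc_floor_add_le_integral hσpos.le hm
    (continuous_sliceProfile (σ := σ) (p := ((d : ℝ) - 1) / 2) (by linarith)).continuousOn
    (antitoneOn_sliceProfile (by linarith))
    (Real.rpow_nonneg (by rw [div_self hσpos.ne']; norm_num) _)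
    (concaveOn_sliceProfile (by linarith) (by linarith))
  have ht1 : ((m : ℝ) / σ) ^ 2 ≤ 1 := by
    rw [div_pow, div_le_one (by positivity)]; nlinarith
  have hquad := quadratic_le_one_sub_one_sub_rpow hd (sq_nonneg ((m : ℝ) / σ)) ht1
  simp only [sliceProfile, zero_div, zero_pow two_ne_zero, sub_zero, Real.one_rpow] at key
  rw [hA₁]
  linarith

/-- For integer `d ≥ 4`, `L, μ > 0`, `σ = Lμ/π`, `σ' = Lμ/(π√(d−2))` with `σ' ≥ 1`, and
`A₁ = (d−3)/4` if `d ≥ 5`, `A₁ = 2/3` if `d = 4`: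
`Σ_{l=1}^{⌊σ⌋} (1−(l/σ)²)^{(d−1)/2} ≤ ∫_0^σ (1−(x/σ)²)^{(d−1)/2} dx
  − ((d−1)/4)(⌊σ'⌋/σ)²(1 − A₁(⌊σ'⌋/σ)²)`. -/
theorem stmt14 (d : ℕ) (hd : 4 ≤ d) (L μ : ℝ) (hL : 0 < L) (hμ : 0 < μ)
    (σ σ' A₁ : ℝ)
    (hσ : σ = L * μ / Real.pi)
    (hσ' : σ' = L * μ / (Real.pi * Real.sqrt ((d : ℝ) - 2)))
    (hσ'1 : 1 ≤ σ')
    (hA₁ : A₁ = if 5 ≤ d then ((d : ℝ) - 3) / 4 else 2 / 3) :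
    ∑ l ∈ Finset.Icc 1 ⌊σ⌋₊, (1 - ((l : ℝ) / σ) ^ 2) ^ (((d : ℝ) - 1) / 2) ≤
      (∫ x in (0 : ℝ)..σ, (1 - (x / σ) ^ 2) ^ (((d : ℝ) - 1) / 2))
      - ((d : ℝ) - 1) / 4 * ((⌊σ'⌋₊ : ℝ) / σ) ^ 2 * (1 - A₁ * ((⌊σ'⌋₊ : ℝ) / σ) ^ 2) :=
  stmt14_general d hd L μ σ σ' A₁ hσ hσ' hσ'1 hA₁
end

section
/- Let L > 0 and μ ≥ 0. Then Σ_{l=0}^{⌊Lμ/π⌋} (μ² − (πl/L)²) ≥ (2L/(3π))·μ³ + (1/2)·μ² − (π/(6L))·μ. -/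
/-!
Substituting `t = Lμ/π` scales everything by `(π/L)²` and reduces the claim to
`∑_{l ≤ ⌊t⌋} (t² − l²) ≥ 2t³/3 + t²/2 − t/6`. For any `n` the gap between the two sides is
`(t − n)(n + 1 − t)(4t + 2n + 1)/6`, which is nonnegative for `n = ⌊t⌋`.
-/

open Finset

theorem six_mul_sum_range_succ_sq_sub_sq {R : Type*} [CommRing R] (t : R) (n : ℕ) :
    6 * ∑ l ∈ range (n + 1), (t ^ 2 - (l : R) ^ 2) =
      4 * t ^ 3 + 3 * t ^ 2 - t + (t - n) * (n + 1 - t) * (4 * t + 2 * n + 1) := by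
  induction n with
  | zero => simp only [zero_add, range_one, sum_singleton, Nat.cast_zero]; ring
  | succ k ih =>
    rw [sum_range_succ, mul_add, ih]
    push_cast
    ring

theorem le_sum_range_floor_succ_sq_sub_sq {t : ℝ} (ht : 0 ≤ t) :
    2 / 3 * t ^ 3 + 1 / 2 * t ^ 2 - 1 / 6 * t ≤
      ∑ l ∈ range (⌊t⌋₊ + 1), (t ^ 2 - (l : ℝ) ^ 2) := by
  have hgap : 0 ≤ (t - ⌊t⌋₊) * (⌊t⌋₊ + 1 - t) * (4 * t + 2 * ⌊t⌋₊ + 1) := by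
    have hle : (⌊t⌋₊ : ℝ) ≤ t := Nat.floor_le ht
    have hlt : t < ⌊t⌋₊ + 1 := Nat.lt_floor_add_one t
    have hn : (0 : ℝ) ≤ ⌊t⌋₊ := Nat.cast_nonneg _
    apply mul_nonneg (mul_nonneg _ _) <;> linarith
  linarith [six_mul_sum_range_succ_sq_sub_sq t ⌊t⌋₊]

/-- For `L > 0` and `μ ≥ 0`:
`Σ_{l=0}^{⌊Lμ/π⌋} (μ² − (πl/L)²) ≥ (2L/(3π))μ³ + (1/2)μ² − (π/(6L))μ`. -/
theorem stmt16 (L μ : ℝ) (hL : 0 < L) (hμ : 0 ≤ μ) :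
    ∑ l ∈ Finset.range (⌊L * μ / Real.pi⌋₊ + 1), (μ ^ 2 - (Real.pi * (l : ℝ) / L) ^ 2) ≥
      2 * L / (3 * Real.pi) * μ ^ 3 + (1 / 2) * μ ^ 2 - Real.pi / (6 * L) * μ := by
  set t := L * μ / Real.pi with ht
  have hμt : μ = Real.pi / L * t := by rw [ht]; field_simp
  have hterm (l : ℕ) : μ ^ 2 - (Real.pi * (l : ℝ) / L) ^ 2 =
      (Real.pi / L) ^ 2 * (t ^ 2 - (l : ℝ) ^ 2) := by
    rw [hμt]; ring
  have hrhs : 2 * L / (3 * Real.pi) * μ ^ 3 + (1 / 2) * μ ^ 2 - Real.pi / (6 * L) * μ =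
      (Real.pi / L) ^ 2 * (2 / 3 * t ^ 3 + 1 / 2 * t ^ 2 - 1 / 6 * t) := by
    rw [hμt]; field_simp
  rw [ge_iff_le, hrhs, sum_congr rfl fun l _ => hterm l, ← mul_sum]
  exact mul_le_mul_of_nonneg_left
    (le_sum_range_floor_succ_sq_sub_sq (by positivity)) (sq_nonneg _)
end

section
/- Let d ≥ 4 be an integer and let L, μ > 0. Set σ = Lμ/π and σ' = Lμ/(π√(d−2)), and suppose σ' ≥ 1. Let A₁ = (d−3)/4 if d ≥ 5 and A₁ = 2/3 if d = 4. Then Σ_{l=0}^{⌊σ⌋} (1 − (l/σ)²)^{(d−1)/2} ≥ ∫_0^σ (1 − (x/σ)²)^{(d−1)/2} dx + ((d−1)/4)·((⌊σ'⌋−1)/σ)²·(1 − A₁·((⌊σ'⌋−1)/σ)²). -/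
/-!
The profile `F x = (1 - (x / σ) ^ 2) ^ p`, `p = (d - 1) / 2`, is decreasing on `[0, σ]`, so every
cell `[l, l + 1]` contributes `F l - ∫_l^{l+1} F ≥ 0` to the sum minus the integral, and the last
partial cell `[⌊σ⌋, σ]` is dominated by `F ⌊σ⌋`. On the cells below `m = ⌊σ'⌋` we do better:
with `u = (l / σ) ^ 2` and `v = (x / σ) ^ 2`, the tangent line of `t ↦ t ^ p` at `1 - v` together
with the Bernoulli-type bound `(1 - v) ^ (p - 1) ≥ 1 - 2 A₁ v` gives
`F x ≤ F l - p (1 - 2 A₁ v) (v - u)`, which integrates to a polynomial lower bound in `l`.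
Summed over `l < m`, these dominate the claimed correction term as soon as
`3 A₁ m ^ 2 ≤ σ ^ 2`, which holds because `σ ^ 2 = (d - 2) σ' ^ 2`.
-/

open Real Finset intervalIntegral

lemma integral_le_of_antitoneOn {F : ℝ → ℝ} {a b : ℝ} (hab : a ≤ b) (hb : b ≤ a + 1)
    (hF : AntitoneOn F (Set.Icc a b)) (hFb : 0 ≤ F b) : ∫ x in a..b, F x ≤ F a := by
  have hFa : 0 ≤ F a := hFb.trans (hF ⟨le_rfl, hab⟩ ⟨hab, le_rfl⟩ hab)
  calc ∫ x in a..b, F x ≤ ∫ _ in a..b, F a :=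
        integral_mono_on hab (hF.mono (Set.uIcc_of_le hab).le).intervalIntegrable
          intervalIntegrable_const fun x hx => hF ⟨le_rfl, hab⟩ hx hx.1
    _ = (b - a) * F a := by simp
    _ ≤ F a := mul_le_of_le_one_left hFa (by linarith)

lemma sum_range_sub_integral_le_of_antitoneOn {F : ℝ → ℝ} {σ : ℝ} (hσ : 0 ≤ σ)
    (hF : AntitoneOn F (Set.Icc 0 σ)) (hFσ : 0 ≤ F σ) {m : ℕ} (hm : m ≤ ⌊σ⌋₊) :
    ∑ l ∈ range m, (F l - ∫ x in (l : ℝ)..l + 1, F x) ≤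
      ∑ l ∈ range (⌊σ⌋₊ + 1), F l - ∫ x in (0 : ℝ)..σ, F x := by
  set N := ⌊σ⌋₊
  have hN : (N : ℝ) ≤ σ := Nat.floor_le hσ
  have hF' {a b : ℝ} (ha : 0 ≤ a) (hb : b ≤ σ) : AntitoneOn F (Set.Icc a b) :=
    hF.mono (Set.Icc_subset_Icc ha hb)
  have hint {a b : ℝ} (ha : 0 ≤ a) (hb : b ≤ σ) (hab : a ≤ b) :
      IntervalIntegrable F MeasureTheory.volume a b :=
    ((hF' ha hb).mono (Set.uIcc_of_le hab).le).intervalIntegrable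
  have cell {l : ℕ} (hl : l < N) : ∫ x in (l : ℝ)..l + 1, F x ≤ F l := by
    have hlσ : (l : ℝ) + 1 ≤ σ := le_trans (by exact_mod_cast hl) hN
    exact integral_le_of_antitoneOn (by linarith) le_rfl (hF' (Nat.cast_nonneg l) hlσ)
      (hFσ.trans (hF ⟨by positivity, hlσ⟩ ⟨hσ, le_rfl⟩ hlσ))
  have tail : ∫ x in (N : ℝ)..σ, F x ≤ F N :=
    integral_le_of_antitoneOn hN (Nat.lt_floor_add_one σ).le (hF' (Nat.cast_nonneg N) le_rfl) hFσ
  have split : ∫ x in (0 : ℝ)..σ, F x =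
      ∑ l ∈ range N, (∫ x in (l : ℝ)..l + 1, F x) + ∫ x in (N : ℝ)..σ, F x := by
    rw [← integral_add_adjacent_intervals (hint le_rfl hN (Nat.cast_nonneg N))
      (hint (Nat.cast_nonneg N) le_rfl hN)]
    congr 1
    have := sum_integral_adjacent_intervals (a := fun k : ℕ => (k : ℝ)) (f := F) (n := N)
      fun k hk => hint (Nat.cast_nonneg k) (le_trans (by exact_mod_cast hk) hN) (by simp)
    push_cast at this
    exact this.symm
  calc ∑ l ∈ range m, (F l - ∫ x in (l : ℝ)..l + 1, F x)
      ≤ ∑ l ∈ range N, (F l - ∫ x in (l : ℝ)..l + 1, F x) :=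
        sum_le_sum_of_subset_of_nonneg (range_subset_range.2 hm) fun l hl _ =>
          sub_nonneg.2 (cell (mem_range.1 hl))
    _ ≤ _ := by rw [sum_range_succ, split, sum_sub_distrib]; linarith

lemma rpow_add_mul_rpow_sub_one_mul_sub_le_rpow {a b q : ℝ} (ha : 0 ≤ a) (hab : a ≤ b)
    (hq : 1 < q) : a ^ q + q * a ^ (q - 1) * (b - a) ≤ b ^ q := by
  rcases ha.eq_or_lt with rfl | ha
  · rw [zero_rpow (by linarith), zero_rpow (by linarith)]
    simpa using rpow_nonneg hab q
  · have bernoulli := one_add_mul_self_le_rpow_one_add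
      (by linarith [div_nonneg (sub_nonneg.2 hab) ha.le] : -1 ≤ (b - a) / a) hq.le
    rw [show 1 + (b - a) / a = b / a by field_simp; ring, div_rpow (ha.le.trans hab) ha.le,
      le_div_iff₀ (rpow_pos_of_pos ha q)] at bernoulli
    calc a ^ q + q * a ^ (q - 1) * (b - a) = (1 + q * ((b - a) / a)) * a ^ q := by
          rw [rpow_sub_one ha.ne']; field_simp
      _ ≤ b ^ q := bernoulli

lemma one_sub_rpow_le_one_sub_rpow_sub {u v p c : ℝ} (huv : u ≤ v) (hv : v ≤ 1)
    (hp : 1 < p) (hc : 1 - c * v ≤ (1 - v) ^ (p - 1)) :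
    (1 - v) ^ p ≤ (1 - u) ^ p - p * (1 - c * v) * (v - u) := by
  have tangent := rpow_add_mul_rpow_sub_one_mul_sub_le_rpow (sub_nonneg.2 hv)
    (by linarith : 1 - v ≤ 1 - u) hp
  have : p * (1 - c * v) * (v - u) ≤ p * (1 - v) ^ (p - 1) * (v - u) := by gcongr
  linarith

lemma antitoneOn_one_sub_div_sq_rpow {σ p : ℝ} (hσ : 0 < σ) (hp : 0 ≤ p) :
    AntitoneOn (fun x => (1 - (x / σ) ^ 2) ^ p) (Set.Icc 0 σ) := by
  rintro x ⟨hx0, -⟩ y ⟨-, hyσ⟩ hxy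
  have : (y / σ) ^ 2 ≤ 1 := by
    rw [div_pow, div_le_one (by positivity)]
    exact pow_le_pow_left₀ (hx0.trans hxy) hyσ 2
  dsimp only
  gcongr

/-- The integral over `[a, a + 1]` of the tangent-line correction
`p (1 - c (x / σ) ^ 2) ((x / σ) ^ 2 - (a / σ) ^ 2)`. -/
noncomputable def cellLowerBound (σ p c a : ℝ) : ℝ :=
  p / σ ^ 2 * (a + 1 / 3) - c * p / σ ^ 4 * (a ^ 3 + 5 / 3 * a ^ 2 + a + 1 / 5)

lemma integral_sub_tangent_correction (σ p c a K : ℝ) :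
    ∫ x in a..a + 1, (K - p * (1 - c * (x / σ) ^ 2) * ((x / σ) ^ 2 - (a / σ) ^ 2)) =
      K - cellLowerBound σ p c a := by
  have expand : (fun x => K - p * (1 - c * (x / σ) ^ 2) * ((x / σ) ^ 2 - (a / σ) ^ 2)) = fun x =>
      (K + p * a ^ 2 / σ ^ 2) -
        ((p / σ ^ 2 + c * p * a ^ 2 / σ ^ 4) * x ^ 2 - c * p / σ ^ 4 * x ^ 4) := by
    ext x; ring
  rw [expand,
    integral_sub intervalIntegrable_const (Continuous.intervalIntegrable (by fun_prop) _ _),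
    integral_sub (Continuous.intervalIntegrable (by fun_prop) _ _)
      (Continuous.intervalIntegrable (by fun_prop) _ _), integral_const_mul, integral_const_mul]
  simp only [integral_const, integral_pow, cellLowerBound]
  ring

lemma cellLowerBound_le_sub_integral {σ p c a : ℝ} (hσ : 0 < σ) (hp : 1 < p)
    (hc : ∀ v ∈ Set.Icc (0 : ℝ) 1, 1 - c * v ≤ (1 - v) ^ (p - 1)) (ha : 0 ≤ a) (haσ : a + 1 ≤ σ) :
    cellLowerBound σ p c a ≤ (1 - (a / σ) ^ 2) ^ p - ∫ x in a..a + 1, (1 - (x / σ) ^ 2) ^ p := by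
  have pointwise : ∀ x ∈ Set.Icc a (a + 1), (1 - (x / σ) ^ 2) ^ p ≤
      (1 - (a / σ) ^ 2) ^ p - p * (1 - c * (x / σ) ^ 2) * ((x / σ) ^ 2 - (a / σ) ^ 2) := by
    rintro x ⟨hax, hxa⟩
    have hxσ : (x / σ) ^ 2 ≤ 1 := by
      rw [div_pow, div_le_one (by positivity)]
      exact pow_le_pow_left₀ (ha.trans hax) (by linarith) 2
    have hax' : (a / σ) ^ 2 ≤ (x / σ) ^ 2 := by gcongr
    exact one_sub_rpow_le_one_sub_rpow_sub hax' hxσ hp (hc _ ⟨by positivity, hxσ⟩)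
  have := integral_mono_on (μ := MeasureTheory.volume) (by linarith)
    (Continuous.intervalIntegrable (by fun_prop (disch := linarith)) _ _)
    (Continuous.intervalIntegrable (by fun_prop) _ _) pointwise
  rw [integral_sub_tangent_correction] at this
  linarith

lemma sum_range_add_one_third (m : ℕ) :
    ∑ l ∈ range m, ((l : ℝ) + 1 / 3) = m * (m - 1) / 2 + m / 3 := by
  induction m with
  | zero => simp
  | succ n ih => rw [sum_range_succ, ih]; push_cast; ring

lemma sum_range_cubic (m : ℕ) :
    ∑ l ∈ range m, ((l : ℝ) ^ 3 + 5 / 3 * l ^ 2 + l + 1 / 5) =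
      ((m : ℝ) * (m - 1) / 2) ^ 2 + 5 / 18 * m * (m - 1) * (2 * m - 1) + m * (m - 1) / 2
        + m / 5 := by
  induction m with
  | zero => simp
  | succ n ih => rw [sum_range_succ, ih]; push_cast; ring

lemma le_sum_range_cellLowerBound {σ p A : ℝ} {m : ℕ} (hσ : 0 < σ) (hp : 0 ≤ p) (hA : 0 ≤ A)
    (hm : 1 ≤ m) (hσm : 3 * A * m ^ 2 ≤ σ ^ 2) :
    p / 2 * ((m - 1) / σ) ^ 2 * (1 - A * ((m - 1) / σ) ^ 2) ≤
      ∑ l ∈ range m, cellLowerBound σ p (2 * A) l := by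
  have hk : (0 : ℝ) ≤ m - 1 := by rw [sub_nonneg]; exact_mod_cast hm
  simp only [cellLowerBound]
  rw [sum_sub_distrib, ← mul_sum, ← mul_sum, sum_range_add_one_third, sum_range_cubic,
    ← sub_nonneg]
  -- The cubic in `m - 1` is `3 m ^ 2 (5 m / 3 - 1) + (m - 1) ^ 4 - 4 ∑_{l < m} (l ^ 3 + ⋯)`.
  have key : 0 ≤ (σ ^ 2 - 3 * A * m ^ 2) * (5 / 3 * m - 1) +
      A * (6 / 5 + 229 / 45 * (m - 1) + 17 / 3 * (m - 1) ^ 2 + 7 / 9 * (m - 1) ^ 3) := by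
    have : (0 : ℝ) ≤ 5 / 3 * m - 1 := by linarith
    have : 0 ≤ σ ^ 2 - 3 * A * m ^ 2 := by linarith
    positivity
  refine (mul_nonneg (by positivity : 0 ≤ p / (2 * σ ^ 4)) key).trans_eq ?_
  field_simp
  ring

noncomputable def quarticCoeff (d : ℕ) : ℝ := if 5 ≤ d then ((d : ℝ) - 3) / 4 else 2 / 3

lemma quarticCoeff_nonneg (d : ℕ) : 0 ≤ quarticCoeff d := by
  unfold quarticCoeff
  split_ifs with h5
  · have : (5 : ℝ) ≤ d := by exact_mod_cast h5
    linarith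
  · norm_num

lemma three_mul_quarticCoeff_le {d : ℕ} (hd : 4 ≤ d) : 3 * quarticCoeff d ≤ d - 2 := by
  have : (4 : ℝ) ≤ d := by exact_mod_cast hd
  unfold quarticCoeff
  split_ifs <;> linarith

lemma one_sub_two_mul_quarticCoeff_le_rpow {d : ℕ} (hd : 4 ≤ d) {v : ℝ}
    (hv : v ∈ Set.Icc (0 : ℝ) 1) :
    1 - 2 * quarticCoeff d * v ≤ (1 - v) ^ (((d : ℝ) - 1) / 2 - 1) := by
  obtain ⟨hv0, hv1⟩ := hv
  unfold quarticCoeff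
  split_ifs with h5
  · have : (5 : ℝ) ≤ d := by exact_mod_cast h5
    convert one_add_mul_self_le_rpow_one_add (by linarith : -1 ≤ -v)
      (by linarith : 1 ≤ ((d : ℝ) - 1) / 2 - 1) using 1 <;> ring_nf
  · obtain rfl : d = 4 := by omega
    calc 1 - 2 * (2 / 3) * v ≤ 1 - v := by linarith
      _ ≤ (1 - v) ^ ((((4 : ℕ) : ℝ) - 1) / 2 - 1) :=
        self_le_rpow_of_le_one (by linarith) (by linarith) (by norm_num)

theorem stmt17_general (d : ℕ) (hd : 4 ≤ d) (L μ : ℝ)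
    (σ σ' A₁ : ℝ)
    (hσ : σ = L * μ / Real.pi)
    (hσ' : σ' = L * μ / (Real.pi * Real.sqrt ((d : ℝ) - 2)))
    (hσ'1 : 1 ≤ σ')
    (hA₁ : A₁ = if 5 ≤ d then ((d : ℝ) - 3) / 4 else 2 / 3) :
    ∑ l ∈ Finset.range (⌊σ⌋₊ + 1), (1 - ((l : ℝ) / σ) ^ 2) ^ (((d : ℝ) - 1) / 2) ≥
      (∫ x in (0 : ℝ)..σ, (1 - (x / σ) ^ 2) ^ (((d : ℝ) - 1) / 2))
      + ((d : ℝ) - 1) / 4 * (((⌊σ'⌋₊ : ℝ) - 1) / σ) ^ 2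
          * (1 - A₁ * (((⌊σ'⌋₊ : ℝ) - 1) / σ) ^ 2) := by
  change A₁ = quarticCoeff d at hA₁
  subst hA₁
  have hd' : (4 : ℝ) ≤ d := by exact_mod_cast hd
  have hsqrt : 1 ≤ √((d : ℝ) - 2) := one_le_sqrt.2 (by linarith)
  have hσσ' : σ = σ' * √((d : ℝ) - 2) := by
    rw [hσ, hσ']
    field_simp [(by positivity : √((d : ℝ) - 2) ≠ 0)]
  have hσ0 : 0 < σ := by rw [hσσ']; positivity
  have hσ'σ : σ' ≤ σ := by rw [hσσ']; exact le_mul_of_one_le_right (by linarith) hsqrt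
  set m := ⌊σ'⌋₊
  have hm1 : 1 ≤ m := Nat.le_floor (by exact_mod_cast hσ'1)
  have hmσ' : (m : ℝ) ≤ σ' := Nat.floor_le (by linarith)
  have hσm : 3 * quarticCoeff d * m ^ 2 ≤ σ ^ 2 := calc
    3 * quarticCoeff d * m ^ 2 ≤ (d - 2) * m ^ 2 := by gcongr; exact three_mul_quarticCoeff_le hd
    _ ≤ (d - 2) * σ' ^ 2 := by gcongr; linarith
    _ = σ ^ 2 := by rw [hσσ', mul_pow, sq_sqrt (by linarith)]; ring
  have hp : 1 < ((d : ℝ) - 1) / 2 := by linarith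
  have correction := le_sum_range_cellLowerBound hσ0 (zero_le_one.trans hp.le)
    (quarticCoeff_nonneg d) hm1 hσm
  have cells := sum_le_sum fun l (hl : l ∈ range m) =>
    cellLowerBound_le_sub_integral hσ0 hp
      (fun v hv => one_sub_two_mul_quarticCoeff_le_rpow hd hv) (Nat.cast_nonneg l)
      (by linarith [show (l : ℝ) + 1 ≤ m by exact_mod_cast mem_range.1 hl])
  have sum_sub_integral := sum_range_sub_integral_le_of_antitoneOn hσ0.le
    (antitoneOn_one_sub_div_sq_rpow hσ0 (zero_le_one.trans hp.le))
    (rpow_nonneg (by simp [hσ0.ne']) _) (Nat.floor_le_floor hσ'σ)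
  linarith

/-- For integer `d ≥ 4`, `L, μ > 0`, `σ = Lμ/π`, `σ' = Lμ/(π√(d−2))` with `σ' ≥ 1`, and
`A₁ = (d−3)/4` if `d ≥ 5`, `A₁ = 2/3` if `d = 4`:
`Σ_{l=0}^{⌊σ⌋} (1−(l/σ)²)^{(d−1)/2} ≥ ∫_0^σ (1−(x/σ)²)^{(d−1)/2} dx
  + ((d−1)/4)((⌊σ'⌋−1)/σ)²(1 − A₁((⌊σ'⌋−1)/σ)²)`. -/
theorem stmt17 (d : ℕ) (hd : 4 ≤ d) (L μ : ℝ) (hL : 0 < L) (hμ : 0 < μ)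
    (σ σ' A₁ : ℝ)
    (hσ : σ = L * μ / Real.pi)
    (hσ' : σ' = L * μ / (Real.pi * Real.sqrt ((d : ℝ) - 2)))
    (hσ'1 : 1 ≤ σ')
    (hA₁ : A₁ = if 5 ≤ d then ((d : ℝ) - 3) / 4 else 2 / 3) :
    ∑ l ∈ Finset.range (⌊σ⌋₊ + 1), (1 - ((l : ℝ) / σ) ^ 2) ^ (((d : ℝ) - 1) / 2) ≥
      (∫ x in (0 : ℝ)..σ, (1 - (x / σ) ^ 2) ^ (((d : ℝ) - 1) / 2))
      + ((d : ℝ) - 1) / 4 * (((⌊σ'⌋₊ : ℝ) - 1) / σ) ^ 2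
          * (1 - A₁ * (((⌊σ'⌋₊ : ℝ) - 1) / σ) ^ 2) :=
  stmt17_general d hd L μ σ σ' A₁ hσ hσ' hσ'1 hA₁
end

section
/- Let d ≥ 4 be an integer and let A₁ = (d−3)/4 if d ≥ 5 and A₁ = 2/3 if d = 4. Then for every t ∈ [0, 1], 1 − (1 − t²)^{(d−1)/2} ≥ ((d−1)/2)·t²·(1 − A₁·t²). -/
/-!
With `x = t²` and `p = (d - 1)/2`, the claim is an upper bound for `(1 - x) ^ p`. For `p ≥ 2`
(that is, `d ≥ 5`) it is the second-order Taylor bound `(1 - x)^p ≤ 1 - p x + p(p-1)/2 x²`,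
whose difference has derivative `p ((1 - y)^(p-1) - (1 - (p-1) y)) ≥ 0` by Bernoulli's
inequality, and `p (p - 1)/2 = p (d - 3)/4`. For `d = 4` write `(1 - x)^(3/2) = (1 - x) √(1 - x)`
and bound `√(1 - x) ≤ 1 - x/2`.
-/

open Set

theorem hasDerivAt_one_sub_rpow {p : ℝ} (hp : 1 ≤ p) (y : ℝ) :
    HasDerivAt (fun y : ℝ => (1 - y) ^ p) (-(p * (1 - y) ^ (p - 1))) y := by
  have h := (Real.hasDerivAt_rpow_const (x := 1 - y) (Or.inr hp)).comp y
    ((hasDerivAt_id y).const_sub 1)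
  exact h.congr_deriv (by ring)

theorem one_sub_rpow_le_taylor {p : ℝ} (hp : 2 ≤ p) {x : ℝ} (hx : x ∈ Icc (0 : ℝ) 1) :
    (1 - x) ^ p ≤ 1 - p * x + p * (p - 1) / 2 * x ^ 2 := by
  set f : ℝ → ℝ := fun y => 1 - p * y + p * (p - 1) / 2 * y ^ 2 - (1 - y) ^ p
  set f' : ℝ → ℝ := fun y => p * ((1 - y) ^ (p - 1) - (1 - (p - 1) * y))
  have hf : ∀ y, HasDerivAt f (f' y) y := fun y => by
    have h := ((((hasDerivAt_id y).const_mul p).const_sub 1).add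
      ((hasDerivAt_pow 2 y).const_mul (p * (p - 1) / 2))).sub
      (hasDerivAt_one_sub_rpow (by linarith) y)
    exact h.congr_deriv (by simp only [f', Nat.cast_ofNat]; ring)
  have hf'_nonneg : ∀ y ∈ interior (Icc (0 : ℝ) 1), 0 ≤ f' y := fun y hy => by
    rw [interior_Icc] at hy
    have bernoulli := one_add_mul_self_le_rpow_one_add (s := -y) (by linarith [hy.2])
      (p := p - 1) (by linarith)
    rw [← sub_eq_add_neg] at bernoulli
    exact mul_nonneg (by linarith) (by linarith)
  have hmono : MonotoneOn f (Icc 0 1) :=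
    monotoneOn_of_hasDerivWithinAt_nonneg (convex_Icc 0 1)
      (continuous_iff_continuousAt.2 fun y => (hf y).continuousAt).continuousOn
      (fun y _ => (hf y).hasDerivWithinAt) hf'_nonneg
  have hf_zero_le := hmono ⟨le_rfl, zero_le_one⟩ hx hx.1
  simp only [f, mul_zero, sub_zero, Real.one_rpow] at hf_zero_le
  linarith

theorem one_sub_rpow_three_halves_le_s18 {x : ℝ} (hx : x ≤ 1) :
    (1 - x) ^ ((3 : ℝ) / 2) ≤ (1 - x) * (1 - x / 2) := by
  have hsqrt : (1 - x) ^ ((1 : ℝ) / 2) ≤ 1 - x / 2 := by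
    have h := rpow_one_add_le_one_add_mul_self (s := -x) (by linarith) (p := 1 / 2)
      (by norm_num) (by norm_num)
    rw [← sub_eq_add_neg] at h
    linarith
  calc (1 - x) ^ ((3 : ℝ) / 2) = (1 - x) * (1 - x) ^ ((1 : ℝ) / 2) := by
        rw [show (3 : ℝ) / 2 = 1 + 1 / 2 by norm_num, Real.rpow_add' (by linarith) (by norm_num),
          Real.rpow_one]
    _ ≤ (1 - x) * (1 - x / 2) := mul_le_mul_of_nonneg_left hsqrt (by linarith)

/-- For integer `d ≥ 4` with `A₁ = (d−3)/4` if `d ≥ 5` and `A₁ = 2/3` if `d = 4`,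
for every `t ∈ [0,1]`: `1 − (1 − t²)^{(d−1)/2} ≥ ((d−1)/2)t²(1 − A₁t²)`. -/
theorem stmt18 (d : ℕ) (hd : 4 ≤ d) (A₁ : ℝ)
    (hA₁ : A₁ = if 5 ≤ d then ((d : ℝ) - 3) / 4 else 2 / 3)
    (t : ℝ) (ht : t ∈ Set.Icc (0 : ℝ) 1) :
    1 - (1 - t ^ 2) ^ (((d : ℝ) - 1) / 2) ≥
      ((d : ℝ) - 1) / 2 * t ^ 2 * (1 - A₁ * t ^ 2) := by
  have hx : t ^ 2 ∈ Icc (0 : ℝ) 1 := ⟨sq_nonneg t, pow_le_one₀ ht.1 ht.2⟩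
  by_cases h5 : 5 ≤ d
  · have hd5 : (5 : ℝ) ≤ d := by exact_mod_cast h5
    have htaylor := one_sub_rpow_le_taylor (p := ((d : ℝ) - 1) / 2) (by linarith) hx
    rw [hA₁, if_pos h5]
    linarith
  · obtain rfl : d = 4 := by omega
    have hbound := one_sub_rpow_three_halves_le_s18 hx.2
    rw [hA₁, if_neg h5]
    norm_num at hbound ⊢
    nlinarith [hx.1]
end
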